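/- arXiv:2104.09183 — 4 statements merged into one kernel-verified Lean document; each statement's English description precedes it below -/
import Mathlib

section
/- With h(x,t) = c₁ + sin(x+t), u(x,t) = (c₁+sin(x+t))⁻¹ − 1, c₁ > 1, g > 0, and a function h_B satisfying ∂h_B/∂x = cos(x+t) − cos(x+t)/(g·(c₁+sin(x+t))³), the surface elevation h_E = h − h_B makes the Euler momentum equation ∂(h u)/∂t = −∂(h u²)/∂x − h·g·∂h_E/∂x hold for all x, t ∈ ℝ. -/
/-!
With `H = c₁ + sin (x + t)` the velocity is `u = H⁻¹ - 1`, so the momentum `H u = 1 - H` and the flux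
`H u² = H⁻¹ - 2 + H` are explicit functions of `H`. Since `H` is a travelling wave, its `x`- and
`t`-derivatives are both `cos (x + t)`, and the chain rule reduces the momentum equation to the
identity `-H' = -H' (1 - H⁻²) - H g · H' / (g H³)`.
-/

open Real

theorem HasDerivAt.mul_inv_sub_one {f : ℝ → ℝ} {f' x : ℝ} (hf : HasDerivAt f f' x)
    (hx : f x ≠ 0) : HasDerivAt (fun y => f y * ((f y)⁻¹ - 1)) (-f') x := by
  refine (hf.fun_mul ((hf.fun_inv hx).sub_const 1)).congr_deriv ?_
  field_simp
  ring

theorem HasDerivAt.mul_inv_sub_one_sq {f : ℝ → ℝ} {f' x : ℝ} (hf : HasDerivAt f f' x)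
    (hx : f x ≠ 0) :
    HasDerivAt (fun y => f y * ((f y)⁻¹ - 1) ^ 2) (f' * (1 - (f x ^ 2)⁻¹)) x := by
  refine (hf.fun_mul (((hf.fun_inv hx).sub_const 1).fun_pow 2)).congr_deriv ?_
  push_cast
  field_simp
  ring

/-- Euler momentum equation holds for the trigonometric solution with a
bathymetry h_B whose x-derivative is the stated expression. -/
theorem stmt_1 (c₁ g : ℝ) (hc : 1 < c₁) (hg : 0 < g)
    (h u h_B h_E : ℝ → ℝ → ℝ)
    (hh : ∀ x t, h x t = c₁ + Real.sin (x + t))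
    (hu : ∀ x t, u x t = (c₁ + Real.sin (x + t))⁻¹ - 1)
    (hBdiff : ∀ x t, DifferentiableAt ℝ (fun y => h_B y t) x)
    (hBx : ∀ x t, deriv (fun y => h_B y t) x =
      Real.cos (x + t) - Real.cos (x + t) / (g * (c₁ + Real.sin (x + t)) ^ 3))
    (hE : ∀ x t, h_E x t = h x t - h_B x t) :
    ∀ x t : ℝ,
      deriv (fun τ => h x τ * u x τ) t =
        -deriv (fun y => h y t * u y t ^ 2) x
          - h x t * g * deriv (fun y => h_E y t) x := by
  intro x t
  have hH : c₁ + sin (x + t) ≠ 0 := by linarith [neg_one_le_sin (x + t)]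
  have hHx : HasDerivAt (fun y => c₁ + sin (y + t)) (cos (x + t)) x := by
    simpa using ((hasDerivAt_id x).add_const t).sin.const_add c₁
  have hHt : HasDerivAt (fun τ => c₁ + sin (x + τ)) (cos (x + t)) t := by
    simpa using ((hasDerivAt_id t).const_add x).sin.const_add c₁
  have momentum := hHt.mul_inv_sub_one hH
  have flux := hHx.mul_inv_sub_one_sq hH
  have elevation := hHx.fun_sub (hBdiff x t).hasDerivAt
  simp only [hh, hu, hE]
  rw [momentum.deriv, flux.deriv, elevation.deriv, hBx]
  field_simp
  ring
end

section
/- With h(x,t) = c₁+sin(x+t), u(x,t) = (c₁+sin(x+t))⁻¹ − 1, h_B(x,t) = c₁+sin(x+t)+(2g)⁻¹(c₁+sin(x+t))⁻², and h_E(x,t) = −(2g)⁻¹(c₁+sin(x+t))⁻², for c₁ > 1 and g > 0: h = h_E + h_B everywhere, and both the continuity equation ∂h/∂t + ∂(hu)/∂x = 0 and the Euler momentum equation ∂(hu)/∂t + ∂(hu²)/∂x + h g ∂h_E/∂x = 0 hold for all x, t ∈ ℝ. -/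
/-- The explicit solution satisfies h = h_E + h_B, the continuity equation,
and the Euler momentum equation. -/
theorem stmt_3 (c₁ g : ℝ) (hc : 1 < c₁) (hg : 0 < g)
    (h u h_B h_E : ℝ → ℝ → ℝ)
    (hh : ∀ x t, h x t = c₁ + Real.sin (x + t))
    (hu : ∀ x t, u x t = (c₁ + Real.sin (x + t))⁻¹ - 1)
    (hB : ∀ x t, h_B x t = c₁ + Real.sin (x + t) +
      (c₁ + Real.sin (x + t))⁻¹ ^ 2 / (2 * g))
    (hE : ∀ x t, h_E x t = -((c₁ + Real.sin (x + t))⁻¹ ^ 2 / (2 * g))) :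
    (∀ x t : ℝ, h x t = h_E x t + h_B x t) ∧
    (∀ x t : ℝ, deriv (fun τ => h x τ) t + deriv (fun y => h y t * u y t) x = 0) ∧
    (∀ x t : ℝ, deriv (fun τ => h x τ * u x τ) t
      + deriv (fun y => h y t * u y t ^ 2) x
      + h x t * g * deriv (fun y => h_E y t) x = 0) := by
  have hpos : ∀ a : ℝ, (0:ℝ) < c₁ + Real.sin a := by
    intro a; nlinarith [Real.neg_one_le_sin a]
  have hne : ∀ a : ℝ, c₁ + Real.sin a ≠ 0 := fun a => (hpos a).ne'
  have hgne : g ≠ 0 := hg.ne'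
  -- derivative of τ ↦ c₁ + sin (x + τ)
  have hdt : ∀ x t : ℝ, HasDerivAt (fun τ => c₁ + Real.sin (x + τ))
      (Real.cos (x + t)) t := by
    intro x t
    have h1 : HasDerivAt (fun τ : ℝ => x + τ) 1 t := by
      simpa using (hasDerivAt_id t).const_add x
    have h2 := (Real.hasDerivAt_sin (x + t)).comp t h1
    simpa using (h2.const_add c₁)
  -- derivative of y ↦ c₁ + sin (y + t)
  have hdx : ∀ x t : ℝ, HasDerivAt (fun y => c₁ + Real.sin (y + t))
      (Real.cos (x + t)) x := by
    intro x t
    have h1 : HasDerivAt (fun y : ℝ => y + t) 1 x := by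
      simpa using (hasDerivAt_id x).add_const t
    have h2 := (Real.hasDerivAt_sin (x + t)).comp x h1
    simpa using (h2.const_add c₁)
  refine ⟨?_, ?_, ?_⟩
  · intro x t
    rw [hh, hB, hE]; ring
  · intro x t
    have e1 : (fun τ => h x τ) = fun τ => c₁ + Real.sin (x + τ) := by
      funext τ; rw [hh]
    have e2 : (fun y => h y t * u y t) = fun y => 1 - (c₁ + Real.sin (y + t)) := by
      funext y; rw [hh, hu]; have := hne (y + t); field_simp
    rw [e1, e2, (hdt x t).deriv]
    have : HasDerivAt (fun y => 1 - (c₁ + Real.sin (y + t)))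
        (-(Real.cos (x + t))) x := by
      simpa using (hdx x t).const_sub 1
    rw [this.deriv]; ring
  · intro x t
    have e1 : (fun τ => h x τ * u x τ) = fun τ => 1 - (c₁ + Real.sin (x + τ)) := by
      funext τ; rw [hh, hu]; have := hne (x + τ); field_simp
    have e2 : (fun y => h y t * u y t ^ 2)
        = fun y => (c₁ + Real.sin (y + t)) - 2 + (c₁ + Real.sin (y + t))⁻¹ := by
      funext y; rw [hh, hu]; have := hne (y + t); field_simp; ring
    have e3 : (fun y => h_E y t)
        = fun y => -((c₁ + Real.sin (y + t))⁻¹ ^ 2 / (2 * g)) := by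
      funext y; rw [hE]
    have d1 : HasDerivAt (fun τ => 1 - (c₁ + Real.sin (x + τ)))
        (-(Real.cos (x + t))) t := by
      simpa using (hdt x t).const_sub 1
    have dinv : HasDerivAt (fun y => (c₁ + Real.sin (y + t))⁻¹)
        (-(Real.cos (x + t)) / (c₁ + Real.sin (x + t)) ^ 2) x :=
      (hdx x t).inv (hne (x + t))
    have d2 : HasDerivAt (fun y => (c₁ + Real.sin (y + t)) - 2 + (c₁ + Real.sin (y + t))⁻¹)
        (Real.cos (x + t) + -(Real.cos (x + t)) / (c₁ + Real.sin (x + t)) ^ 2) x :=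
      ((hdx x t).sub_const 2).add dinv
    have d3 : HasDerivAt (fun y => -((c₁ + Real.sin (y + t))⁻¹ ^ 2 / (2 * g)))
        (-((2 * (c₁ + Real.sin (x + t))⁻¹ ^ 1 *
          (-(Real.cos (x + t)) / (c₁ + Real.sin (x + t)) ^ 2)) / (2 * g))) x :=
      ((dinv.pow 2).div_const (2 * g)).neg
    rw [e1, e2, e3, d1.deriv, d2.deriv, d3.deriv, hh]
    have hv := hne (x + t)
    field_simp
    ring
end

section
/- The velocity u(x,t) = (c₁+sin(x+t))⁻¹ − 1 with surface elevation h_E(x,t) = −(2g)⁻¹(c₁+sin(x+t))⁻² satisfies the convective Euler equation ∂u/∂t + u ∂u/∂x + g ∂h_E/∂x = 0 for all x, t ∈ ℝ, when c₁ > 1 and g ≠ 0. -/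
/-! Both fields are functions of `x + t` alone: with `φ z = (c₁ + sin z)⁻¹` we have
`u = φ (x + t) - 1`, so `∂ₜu = ∂ₓu = φ'` and `∂ₜu + u ∂ₓu = φ φ' = (φ² / 2)'`, which is exactly
`-g ∂ₓh_E`. This works for any differentiable profile `φ`. -/

open Real

theorem convective_euler_of_travelling_wave {f : ℝ → ℝ} {g x t : ℝ} (hg : g ≠ 0)
    (hf : DifferentiableAt ℝ f (x + t)) :
    deriv (fun τ => f (x + τ) - 1) t
      + (f (x + t) - 1) * deriv (fun y => f (y + t) - 1) x
      + g * deriv (fun y => -((2 * g)⁻¹ * f (y + t) ^ 2)) x = 0 := by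
  have hsq : HasDerivAt (fun y => -((2 * g)⁻¹ * f (y + t) ^ 2))
      (-((2 * g)⁻¹ * (2 * f (x + t) * deriv f (x + t)))) x := by
    refine (((hf.hasDerivAt.comp_add_const x t).fun_pow 2).const_mul _).fun_neg.congr_deriv ?_
    norm_num
  rw [deriv_sub_const, deriv_sub_const, deriv_comp_const_add, deriv_comp_add_const, hsq.deriv]
  field_simp
  ring

theorem differentiable_inv_const_add_sin {c : ℝ} (hc : 1 < c) :
    Differentiable ℝ fun z => (c + sin z)⁻¹ := fun z =>
  ((differentiableAt_const c).add differentiableAt_sin).inv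
    (show c + sin z ≠ 0 by linarith [neg_one_le_sin z])

/-- The explicit velocity and surface elevation satisfy the convective Euler
equation. -/
theorem stmt_6 (c₁ g : ℝ) (hc : 1 < c₁) (hg : g ≠ 0)
    (u h_E : ℝ → ℝ → ℝ)
    (hu : ∀ x t, u x t = (c₁ + Real.sin (x + t))⁻¹ - 1)
    (hE : ∀ x t, h_E x t = -((2 * g)⁻¹ * (c₁ + Real.sin (x + t))⁻¹ ^ 2)) :
    ∀ x t : ℝ, deriv (fun τ => u x τ) t
      + u x t * deriv (fun y => u y t) x
      + g * deriv (fun y => h_E y t) x = 0 := by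
  obtain rfl : u = fun x t => (c₁ + sin (x + t))⁻¹ - 1 := funext₂ hu
  obtain rfl : h_E = fun x t => -((2 * g)⁻¹ * (c₁ + sin (x + t))⁻¹ ^ 2) := funext₂ hE
  intro x t
  exact convective_euler_of_travelling_wave (f := fun z => (c₁ + sin z)⁻¹) hg
    (differentiable_inv_const_add_sin hc _)
end

section
/- With h(x,t) = c₁+sin(x+t), u(x,t) = (c₁+sin(x+t))⁻¹ − 1, c₁ > 1, g > 0, k_H ∈ ℝ, and h_B satisfying ∂h_B/∂x = cos(x+t) − (k_H/g)·(sin(x+t)(sin(x+t)+c₁)+cos²(x+t))/(sin(x+t)+c₁)³ − (1/g)·cos(x+t)/(c₁+sin(x+t))³, the Navier–Stokes momentum equation ∂(hu)/∂t + ∂(hu²)/∂x = k_H ∂(h ∂u/∂x)/∂x − h g ∂h_E/∂x with h_E = h − h_B holds for all x, t ∈ ℝ. -/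
/-!
Everything depends on `(x, t)` only through `s = x + t`, with depth `w s = c₁ + sin s`
(positive since `c₁ > 1`) and velocity `u = w⁻¹ - 1`. Hence `h u = 1 - w` and
`h u² = w⁻¹ - 2 + w`, so the left-hand side is `-cos s / w²`, while `h ∂ₓu = -cos s / w`.
The prescribed slope of `h_B` is chosen so that `-h g ∂ₓh_E` cancels the viscous term and
leaves exactly `-cos s / w²`.
-/

open Real

lemma const_add_sin_pos {c : ℝ} (hc : 1 < c) (s : ℝ) : 0 < c + sin s := by
  linarith [neg_one_le_sin s]

lemma hasDerivAt_const_add_sin (c s : ℝ) : HasDerivAt (fun s => c + sin s) (cos s) s :=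
  (hasDerivAt_sin s).const_add c

lemma hasDerivAt_inv_const_add_sin {c s : ℝ} (hs : c + sin s ≠ 0) :
    HasDerivAt (fun s => (c + sin s)⁻¹) (-cos s / (c + sin s) ^ 2) s :=
  (hasDerivAt_const_add_sin c s).inv hs

lemma hasDerivAt_neg_cos_div_const_add_sin {c s : ℝ} (hs : c + sin s ≠ 0) :
    HasDerivAt (fun s => -cos s / (c + sin s))
      ((sin s * (c + sin s) + cos s ^ 2) / (c + sin s) ^ 2) s :=
  ((hasDerivAt_cos s).fun_neg.fun_div (hasDerivAt_const_add_sin c s) hs).congr_deriv (by ring)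

lemma mul_inv_sub_one {w : ℝ} (hw : w ≠ 0) : w * (w⁻¹ - 1) = 1 - w := by
  rw [mul_sub, mul_inv_cancel₀ hw, mul_one]

lemma mul_inv_sub_one_sq {w : ℝ} (hw : w ≠ 0) : w * (w⁻¹ - 1) ^ 2 = w⁻¹ - 2 + w := by
  field_simp
  ring

/-- The Navier–Stokes momentum equation holds for the trigonometric solution
with a bathymetry h_B whose x-derivative is the stated expression. -/
theorem stmt_8 (c₁ g k_H : ℝ) (hc : 1 < c₁) (hg : 0 < g)
    (h u h_B h_E : ℝ → ℝ → ℝ)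
    (hh : ∀ x t, h x t = c₁ + Real.sin (x + t))
    (hu : ∀ x t, u x t = (c₁ + Real.sin (x + t))⁻¹ - 1)
    (hBdiff : ∀ x t, DifferentiableAt ℝ (fun y => h_B y t) x)
    (hBx : ∀ x t, deriv (fun y => h_B y t) x =
      Real.cos (x + t)
        - (k_H / g) * (Real.sin (x + t) * (Real.sin (x + t) + c₁)
            + Real.cos (x + t) ^ 2) / (Real.sin (x + t) + c₁) ^ 3
        - (1 / g) * (Real.cos (x + t) / (c₁ + Real.sin (x + t)) ^ 3))
    (hE : ∀ x t, h_E x t = h x t - h_B x t) :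
    ∀ x t : ℝ,
      deriv (fun τ => h x τ * u x τ) t
        + deriv (fun y => h y t * u y t ^ 2) x =
      k_H * deriv (fun y => h y t * deriv (fun z => u z t) y) x
        - h x t * g * deriv (fun y => h_E y t) x := by
  intro x t
  have hw : ∀ s, c₁ + sin s ≠ 0 := fun s => (const_add_sin_pos hc s).ne'
  have hw' := hw (x + t)
  have hh' : ∀ y, HasDerivAt (fun y => h y t) (cos (y + t)) y := fun y => by
    simpa only [hh] using (hasDerivAt_const_add_sin c₁ _).comp_add_const y t
  have hux : ∀ y, HasDerivAt (fun y => u y t) (-cos (y + t) / (c₁ + sin (y + t)) ^ 2) y :=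
    fun y => by
      simpa only [hu] using
        ((hasDerivAt_inv_const_add_sin (hw _)).sub_const 1).comp_add_const y t
  have dmom : deriv (fun τ => h x τ * u x τ) t = -cos (x + t) := by
    simp only [hh, hu, mul_inv_sub_one (hw _)]
    exact (((hasDerivAt_const_add_sin c₁ _).const_sub 1).comp_const_add x t).deriv
  have dflux : deriv (fun y => h y t * u y t ^ 2) x
      = -cos (x + t) / (c₁ + sin (x + t)) ^ 2 + cos (x + t) := by
    simp only [hh, hu, mul_inv_sub_one_sq (hw _)]
    exact ((((hasDerivAt_inv_const_add_sin hw').sub_const 2).add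
      (hasDerivAt_const_add_sin c₁ _)).comp_add_const x t).deriv
  have dvisc : deriv (fun y => h y t * deriv (fun z => u z t) y) x
      = (sin (x + t) * (c₁ + sin (x + t)) + cos (x + t) ^ 2) / (c₁ + sin (x + t)) ^ 2 := by
    have : (fun y => h y t * deriv (fun z => u z t) y)
        = fun y => -cos (y + t) / (c₁ + sin (y + t)) := by
      funext y
      rw [(hux y).deriv, hh]
      field_simp [hw (y + t)]
    rw [this]
    exact ((hasDerivAt_neg_cos_div_const_add_sin hw').comp_add_const x t).deriv
  have dhE : deriv (fun y => h_E y t) x = cos (x + t) - deriv (fun y => h_B y t) x := by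
    simp only [hE]
    rw [deriv_fun_sub (hh' x).differentiableAt (hBdiff x t), (hh' x).deriv]
  rw [dmom, dflux, dvisc, dhE, hBx, hh, add_comm (sin (x + t)) c₁]
  field_simp
  ring
end
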